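/- For every s ∈ ℂ, the quotient of the formal power series ring ℂ[[x,y,z]] in three variables by the ideal generated by the three power series 2x, 3y² + s·z⁵, and 7z⁶ + 5s·y·z⁴ is a finite-dimensional ℂ-vector space of dimension exactly 12. -/

import Mathlib

noncomputable section

open MvPowerSeries

/-- The Jacobian ideal of `f_s = x² + y³ + z⁷ + s·y·z⁵` in `ℂ[[x,y,z]]`,
generated by `∂f_s/∂x = 2x`, `∂f_s/∂y = 3y² + s·z⁵` and `∂f_s/∂z = 7z⁶ + 5s·y·z⁴`. -/
def jacobianIdeal (s : ℂ) : Ideal (MvPowerSeries (Fin 3) ℂ) :=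
  Ideal.span
    {2 * X 0,
     3 * X 1 ^ 2 + (C : ℂ →+* MvPowerSeries (Fin 3) ℂ) s * X 2 ^ 5,
     7 * X 2 ^ 6 + 5 * (C : ℂ →+* MvPowerSeries (Fin 3) ℂ) s * X 1 * X 2 ^ 4}

namespace Milnor12

open Finsupp

abbrev R3 := MvPowerSeries (Fin 3) ℂ

/-! ### Exponents and monomials -/

def E (i j : ℕ) : Fin 3 →₀ ℕ := Finsupp.single 1 i + Finsupp.single 2 j

@[simp] lemma E_apply0 (i j : ℕ) : E i j 0 = 0 := by simp [E, Finsupp.single_apply]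
@[simp] lemma E_apply1 (i j : ℕ) : E i j 1 = i := by simp [E, Finsupp.single_apply]
@[simp] lemma E_apply2 (i j : ℕ) : E i j 2 = j := by simp [E, Finsupp.single_apply]

lemma E_le {a b i j : ℕ} : E a b ≤ E i j ↔ a ≤ i ∧ b ≤ j := by
  rw [Finsupp.le_def]
  constructor
  · exact fun h => ⟨by simpa using h 1, by simpa using h 2⟩
  · rintro ⟨h1, h2⟩ c; fin_cases c <;> simp [h1, h2]

lemma E_sub {a b i j : ℕ} : E i j - E a b = E (i - a) (j - b) := by
  ext c; rw [Finsupp.tsub_apply]; fin_cases c <;> simp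

lemma eq_E_of (e : Fin 3 →₀ ℕ) (h : e 0 = 0) : e = E (e 1) (e 2) := by
  ext c; fin_cases c <;> simp [h]

def M (i j : ℕ) : R3 := MvPowerSeries.X 1 ^ i * MvPowerSeries.X 2 ^ j

lemma M_eq (i j : ℕ) : M i j = monomial (E i j) 1 := by
  rw [M, E, X_pow_eq, X_pow_eq, monomial_mul_monomial, one_mul]

lemma coeff_mul_M (r : R3) (i j a b : ℕ) :
    coeff (E i j) (r * M a b) =
      if a ≤ i ∧ b ≤ j then coeff (E (i - a) (j - b)) r else 0 := by
  rw [M_eq, coeff_mul_monomial]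
  by_cases h : a ≤ i ∧ b ≤ j
  · rw [if_pos (E_le.2 h), if_pos h, E_sub, mul_one]
  · rw [if_neg (fun hle => h (E_le.1 hle)), if_neg h]

lemma coeff_M (i j a b : ℕ) :
    coeff (E i j) (M a b) = if a = i ∧ b = j then 1 else 0 := by
  rw [M_eq, coeff_monomial]
  by_cases h : a = i ∧ b = j
  · obtain ⟨rfl, rfl⟩ := h; simp
  · rw [if_neg, if_neg h]
    intro he
    have h1 := congrArg (fun f => f 1) he
    have h2 := congrArg (fun f => f 2) he
    simp at h1 h2
    exact h ⟨h1.symm, h2.symm⟩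

lemma ofNat_eq_C (n : ℕ) [n.AtLeastTwo] : (OfNat.ofNat n : R3) = (C : ℂ →+* MvPowerSeries (Fin 3) ℂ) (OfNat.ofNat n) :=
  (map_ofNat ((C : ℂ →+* MvPowerSeries (Fin 3) ℂ)) n).symm

/-! ### The combinatorial data `lam` -/

def bas (i j : ℕ) : Fin 2 × Fin 6 → ℂ := fun k => if k.1.val = i ∧ k.2.val = j then 1 else 0

def lam (s : ℂ) (i j : ℕ) : Fin 2 × Fin 6 → ℂ :=
  if i ≤ 1 ∧ j ≤ 5 then bas i j
  else if i = 0 ∧ j = 6 then (-(5*s/7)) • bas 1 4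
  else if i = 0 ∧ j = 7 then (-(5*s/7)) • bas 1 5
  else if i = 2 ∧ j = 0 then (-(s/3)) • bas 0 5
  else if i = 2 ∧ j = 1 then (5*s^2/21) • bas 1 4
  else if i = 2 ∧ j = 2 then (5*s^2/21) • bas 1 5
  else if i = 3 ∧ j = 0 then (-(s/3)) • bas 1 5
  else 0

lemma lam_zero_of {s : ℂ} {i j : ℕ} (h : 4 ≤ i ∨ 8 ≤ j) : lam s i j = 0 := by
  rw [lam]; split_ifs <;> first | rfl | (exfalso; omega) | simp_all

lemma lam_zero_hi {s : ℂ} {i j : ℕ} (h1 : 2 ≤ i) (h2 : 3 ≤ j) : lam s i j = 0 := by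
  rw [lam]; split_ifs <;> first | rfl | (exfalso; omega) | simp_all

lemma lamA (s : ℂ) (p q : ℕ) (k : Fin 2 × Fin 6) :
    3 * lam s (p+2) q k + s * lam s p (q+5) k = 0 := by
  match p, q with
  | 0, 0 => norm_num [lam, bas]; split_ifs <;> ring
  | 0, 1 => norm_num [lam, bas]; split_ifs <;> ring
  | 0, 2 => norm_num [lam, bas]; split_ifs <;> ring
  | 0, (q+3) => rw [lam_zero_hi (by omega) (by omega), lam_zero_of (by omega)]; simp
  | 1, 0 => norm_num [lam, bas]; split_ifs <;> ring
  | 1, (q+1) =>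
      have h3 : lam s (1+2) (q+1) = 0 := by
        rw [lam]; split_ifs <;> first | rfl | (exfalso; omega) | simp_all
      rw [h3]
      have : lam s 1 (q+1+5) = 0 := by
        rw [lam]; split_ifs <;> first | rfl | (exfalso; omega) | simp_all
      rw [this]; simp
  | 2, q =>
      rw [lam_zero_of (by omega), lam_zero_hi (by omega) (by omega)]; simp
  | 3, q =>
      rw [lam_zero_of (by omega), lam_zero_hi (by omega) (by omega)]; simp
  | (p+4), q =>
      rw [lam_zero_of (by omega), lam_zero_of (s := s) (i := p+4) (j := q+5) (by omega)]; simp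

lemma lamB (s : ℂ) (p q : ℕ) (k : Fin 2 × Fin 6) :
    7 * lam s p (q+6) k + 5 * s * lam s (p+1) (q+4) k = 0 := by
  match p, q with
  | 0, 0 => norm_num [lam, bas]; split_ifs <;> ring
  | 0, 1 => norm_num [lam, bas]; split_ifs <;> ring
  | 0, (q+2) =>
      rw [lam_zero_of (by omega)]
      have : lam s 1 (q+2+4) = 0 := by
        rw [lam]; split_ifs <;> first | rfl | (exfalso; omega) | simp_all
      rw [this]; simp
  | 1, q =>
      have h1 : lam s 1 (q+6) = 0 := by
        rw [lam]; split_ifs <;> first | rfl | (exfalso; omega) | simp_all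
      rw [h1, lam_zero_hi (by omega) (by omega)]; simp
  | 2, q =>
      rw [lam_zero_hi (by omega) (by omega), lam_zero_hi (by omega) (by omega)]; simp
  | (p+3), q =>
      rw [lam_zero_hi (by omega) (by omega), lam_zero_of (s := s) (i := p+3+1) (by omega)]; simp

/-! ### The linear functional `phi` -/

def grid : Finset (ℕ × ℕ) := Finset.range 4 ×ˢ Finset.range 8

lemma reindex (a b : ℕ) (G : ℕ → ℕ → ℂ) (hG : ∀ p q, 4 ≤ p + a ∨ 8 ≤ q + b → G p q = 0) :
    ∑ x ∈ grid, (if a ≤ x.1 ∧ b ≤ x.2 then G (x.1-a) (x.2-b) else 0)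
      = ∑ x ∈ grid, G x.1 x.2 := by
  rw [Finset.sum_ite, Finset.sum_const_zero, add_zero]
  rw [← Finset.sum_filter_add_sum_filter_not grid (fun x => x.1 + a < 4 ∧ x.2 + b < 8)
    (fun x => G x.1 x.2)]
  have h2 : ∑ x ∈ grid.filter (fun x => ¬(x.1 + a < 4 ∧ x.2 + b < 8)), G x.1 x.2 = 0 :=
    Finset.sum_eq_zero (fun x hx => by
      simp only [grid, Finset.mem_filter, Finset.mem_product, Finset.mem_range] at hx
      exact hG _ _ (by omega))
  rw [h2, add_zero]
  apply Finset.sum_nbij' (i := fun x => (x.1 - a, x.2 - b)) (j := fun x => (x.1 + a, x.2 + b)) <;>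
    simp only [grid, Finset.mem_filter, Finset.mem_product, Finset.mem_range, Prod.forall,
      Prod.mk.injEq] <;> intros <;> first | omega | (congr 1 <;> omega) | rfl | trivial

def phi (s : ℂ) (f : R3) (k : Fin 2 × Fin 6) : ℂ :=
  ∑ x ∈ grid, coeff (E x.1 x.2) f * lam s x.1 x.2 k

lemma phi_add (s : ℂ) (f g : R3) (k : Fin 2 × Fin 6) :
    phi s (f + g) k = phi s f k + phi s g k := by
  simp [phi, add_mul, Finset.sum_add_distrib]

lemma phi_smul (s c : ℂ) (f : R3) (k : Fin 2 × Fin 6) :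
    phi s (c • f) k = c * phi s f k := by
  simp [phi, Finset.mul_sum, mul_assoc]

lemma sum_shift (s : ℂ) (a b : ℕ) (c : ℕ → ℕ → ℂ) (w : ℂ) (k : Fin 2 × Fin 6) :
    ∑ x ∈ grid, (if a ≤ x.1 ∧ b ≤ x.2 then w * c (x.1-a) (x.2-b) else 0) * lam s x.1 x.2 k
      = ∑ x ∈ grid, w * c x.1 x.2 * lam s (x.1+a) (x.2+b) k := by
  rw [← reindex a b (fun p q => w * c p q * lam s (p+a) (q+b) k)
    (fun p q h => by rw [lam_zero_of h]; simp)]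
  apply Finset.sum_congr rfl
  intro x hx
  rw [ite_mul, zero_mul]
  by_cases h : a ≤ x.1 ∧ b ≤ x.2
  · rw [if_pos h, if_pos h, Nat.sub_add_cancel h.1, Nat.sub_add_cancel h.2]
  · rw [if_neg h, if_neg h]

lemma phi_mul_gx (s : ℂ) (r : R3) (k : Fin 2 × Fin 6) :
    phi s (r * (2 * MvPowerSeries.X 0)) k = 0 := by
  have hc : ∀ x : ℕ × ℕ, coeff (E x.1 x.2) (r * (2 * MvPowerSeries.X 0)) = 0 := by
    intro x
    have hx : (MvPowerSeries.X 0 : R3) = monomial (Finsupp.single 0 1) 1 := by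
      rw [← X_pow_eq, pow_one]
    have h2 : r * (2 * MvPowerSeries.X 0) = (r * 2) * monomial (Finsupp.single 0 1) 1 := by
      rw [hx]; ring
    rw [h2, coeff_mul_monomial, if_neg]
    intro hle
    have h3 := Finsupp.le_def.1 hle 0
    simp [Finsupp.single_apply] at h3
  simp only [phi]
  apply Finset.sum_eq_zero
  intro x hx
  rw [hc x, zero_mul]

lemma phi_mul_g1 (s : ℂ) (r : R3) (k : Fin 2 × Fin 6) :
    phi s (r * (3 * X 1 ^ 2 + (C : ℂ →+* MvPowerSeries (Fin 3) ℂ) s * X 2 ^ 5)) k = 0 := by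
  have hr : r * (3 * X 1 ^ 2 + (C : ℂ →+* MvPowerSeries (Fin 3) ℂ) s * X 2 ^ 5)
      = (C : ℂ →+* MvPowerSeries (Fin 3) ℂ) 3 * (r * M 2 0) + (C : ℂ →+* MvPowerSeries (Fin 3) ℂ) s * (r * M 0 5) := by
    rw [M, M, ofNat_eq_C]; ring
  simp only [phi, hr, map_add, coeff_C_mul, coeff_mul_M, mul_ite, mul_zero, add_mul, ite_mul,
    zero_mul]
  rw [Finset.sum_add_distrib]
  have e1 := sum_shift s 2 0 (fun p q => coeff (E p q) r) 3 k
  have e2 := sum_shift s 0 5 (fun p q => coeff (E p q) r) s k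
  simp only [ite_mul, zero_mul] at e1 e2
  rw [e1, e2, ← Finset.sum_add_distrib]
  apply Finset.sum_eq_zero
  intro x hx
  have hA := lamA s x.1 x.2 k
  simp only [Nat.add_zero]
  linear_combination (coeff (E x.1 x.2) r) * hA

lemma phi_mul_g2 (s : ℂ) (r : R3) (k : Fin 2 × Fin 6) :
    phi s (r * (7 * X 2 ^ 6 + 5 * (C : ℂ →+* MvPowerSeries (Fin 3) ℂ) s * X 1 * X 2 ^ 4)) k = 0 := by
  have hr : r * (7 * X 2 ^ 6 + 5 * (C : ℂ →+* MvPowerSeries (Fin 3) ℂ) s * X 1 * X 2 ^ 4)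
      = (C : ℂ →+* MvPowerSeries (Fin 3) ℂ) 7 * (r * M 0 6) + (C : ℂ →+* MvPowerSeries (Fin 3) ℂ) (5 * s) * (r * M 1 4) := by
    rw [M, M, ofNat_eq_C (n := 7), show ((5:R3)) = (C : ℂ →+* MvPowerSeries (Fin 3) ℂ) 5 from ofNat_eq_C 5, ← map_mul]
    ring
  simp only [phi, hr, map_add, coeff_C_mul, coeff_mul_M, mul_ite, mul_zero, add_mul, ite_mul,
    zero_mul]
  rw [Finset.sum_add_distrib]
  have e1 := sum_shift s 0 6 (fun p q => coeff (E p q) r) 7 k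
  have e2 := sum_shift s 1 4 (fun p q => coeff (E p q) r) (5 * s) k
  simp only [ite_mul, zero_mul] at e1 e2
  rw [e1, e2, ← Finset.sum_add_distrib]
  apply Finset.sum_eq_zero
  intro x hx
  have hB := lamB s x.1 x.2 k
  simp only [Nat.add_zero]
  linear_combination (coeff (E x.1 x.2) r) * hB

lemma phi_vanish (s : ℂ) (f : R3) (hf : f ∈ jacobianIdeal s) (k : Fin 2 × Fin 6) :
    phi s f k = 0 := by
  have H : ∀ r : R3, phi s (r * f) k = 0 := by
    refine Submodule.span_induction
      (p := fun g _ => ∀ r : R3, phi s (r * g) k = 0) ?_ ?_ ?_ ?_ hf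
    · intro x hx
      simp only [Set.mem_insert_iff, Set.mem_singleton_iff] at hx
      rcases hx with rfl | rfl | rfl
      · exact fun r => phi_mul_gx s r k
      · exact fun r => phi_mul_g1 s r k
      · exact fun r => phi_mul_g2 s r k
    · intro r; rw [mul_zero]; simp [phi]
    · intro x y _ _ ihx ihy r
      rw [mul_add]
      have := phi_add s (r * x) (r * y) k
      rw [this, ihx r, ihy r, add_zero]
    · intro a x _ ih r
      rw [smul_eq_mul, ← mul_assoc]
      exact ih (r * a)
  have := H 1
  rwa [one_mul] at this

lemma phi_M_basis (s : ℂ) (a b : ℕ) (ha : a < 4) (hb : b < 8) (k : Fin 2 × Fin 6) :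
    phi s (M a b) k = lam s a b k := by
  rw [phi]
  have hcong : ∀ x ∈ grid, coeff (E x.1 x.2) (M a b) * lam s x.1 x.2 k
      = if (a, b) = x then lam s x.1 x.2 k else 0 := by
    intro x hx
    rw [coeff_M]
    by_cases h : a = x.1 ∧ b = x.2
    · rw [if_pos h, if_pos (Prod.ext_iff.2 h), one_mul]
    · rw [if_neg h, if_neg (fun he => h ⟨congrArg Prod.fst he, congrArg Prod.snd he⟩), zero_mul]
  rw [Finset.sum_congr rfl hcong, Finset.sum_ite_eq grid (a, b) (fun x => lam s x.1 x.2 k),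
    if_pos (by simp [grid, Finset.mem_product, Finset.mem_range]; omega)]

/-! ### Ideal membership facts -/

variable (s : ℂ)

lemma memI_of_C_mul (c : ℂ) (hc : c ≠ 0) {x : R3}
    (h : (C : ℂ →+* MvPowerSeries (Fin 3) ℂ) c * x ∈ jacobianIdeal s) : x ∈ jacobianIdeal s := by
  have hx : x = (C : ℂ →+* MvPowerSeries (Fin 3) ℂ) c⁻¹ * ((C : ℂ →+* MvPowerSeries (Fin 3) ℂ) c * x) := by
    rw [← mul_assoc, ← map_mul, inv_mul_cancel₀ hc, map_one, one_mul]
  rw [hx]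
  exact Ideal.mul_mem_left _ _ h

lemma g1_mem : (3 * X 1 ^ 2 + (C : ℂ →+* MvPowerSeries (Fin 3) ℂ) s * X 2 ^ 5 : R3) ∈ jacobianIdeal s :=
  Ideal.subset_span (by simp)

lemma g2_mem : (7 * X 2 ^ 6 + 5 * (C : ℂ →+* MvPowerSeries (Fin 3) ℂ) s * X 1 * X 2 ^ 4 : R3) ∈ jacobianIdeal s :=
  Ideal.subset_span (by simp)

lemma gx_mem : (2 * MvPowerSeries.X 0 : R3) ∈ jacobianIdeal s :=
  Ideal.subset_span (by simp)

lemma C_mul_C (c d : ℂ) : (C : ℂ →+* MvPowerSeries (Fin 3) ℂ) c * (C : ℂ →+* MvPowerSeries (Fin 3) ℂ) d = (C : ℂ →+* MvPowerSeries (Fin 3) ℂ) (c * d) :=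
  (map_mul _ _ _).symm

lemma X0_mem : (MvPowerSeries.X 0 : R3) ∈ jacobianIdeal s := by
  apply memI_of_C_mul s 2 two_ne_zero
  rw [← ofNat_eq_C]
  exact gx_mem s

lemma z8_mem : (MvPowerSeries.X 2 ^ 8 : R3) ∈ jacobianIdeal s := by
  set u : R3 := 147 + 25 * ((C : ℂ →+* MvPowerSeries (Fin 3) ℂ) s)^3 * X 2 with hu
  have hunit : IsUnit u := by
    rw [isUnit_iff_constantCoeff]
    have : constantCoeff u = 147 := by
      rw [hu]
      simp [map_ofNat, constantCoeff_X]
    rw [this]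
    norm_num
  have key : u * X 2 ^ 8
      = (21 * X 2 ^ 2 - 15 * (C : ℂ →+* MvPowerSeries (Fin 3) ℂ) s * X 1) * (7 * X 2 ^ 6 + 5 * (C : ℂ →+* MvPowerSeries (Fin 3) ℂ) s * X 1 * X 2 ^ 4)
        + (25 * ((C : ℂ →+* MvPowerSeries (Fin 3) ℂ) s)^2 * X 2 ^ 4) * (3 * X 1 ^ 2 + (C : ℂ →+* MvPowerSeries (Fin 3) ℂ) s * X 2 ^ 5) := by
    rw [hu]; ring
  obtain ⟨w, hw⟩ := hunit
  have hX : (MvPowerSeries.X 2 ^ 8 : R3) = (↑w⁻¹ : R3) * (u * X 2 ^ 8) := by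
    rw [← hw, ← mul_assoc, Units.inv_mul, one_mul]
  rw [hX, key]
  exact Ideal.mul_mem_left _ _
    (Ideal.add_mem _ (Ideal.mul_mem_left _ _ (g2_mem s)) (Ideal.mul_mem_left _ _ (g1_mem s)))

lemma y4_mem : (MvPowerSeries.X 1 ^ 4 : R3) ∈ jacobianIdeal s := by
  apply memI_of_C_mul s 9 (by norm_num)
  have key : (C : ℂ →+* MvPowerSeries (Fin 3) ℂ) 9 * X 1 ^ 4
      = (3 * X 1 ^ 2 - (C : ℂ →+* MvPowerSeries (Fin 3) ℂ) s * X 2 ^ 5) * (3 * X 1 ^ 2 + (C : ℂ →+* MvPowerSeries (Fin 3) ℂ) s * X 2 ^ 5)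
        + (((C : ℂ →+* MvPowerSeries (Fin 3) ℂ) s)^2 * X 2 ^ 2) * X 2 ^ 8 := by
    rw [← ofNat_eq_C]; ring
  rw [key]
  exact Ideal.add_mem _ (Ideal.mul_mem_left _ _ (g1_mem s)) (Ideal.mul_mem_left _ _ (z8_mem s))

lemma yz6_mem : (MvPowerSeries.X 1 * MvPowerSeries.X 2 ^ 6 : R3) ∈ jacobianIdeal s := by
  apply memI_of_C_mul s 21 (by norm_num)
  have key : (C : ℂ →+* MvPowerSeries (Fin 3) ℂ) 21 * (X 1 * X 2 ^ 6)
      = (3 * X 1) * (7 * X 2 ^ 6 + 5 * (C : ℂ →+* MvPowerSeries (Fin 3) ℂ) s * X 1 * X 2 ^ 4)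
        - (5 * (C : ℂ →+* MvPowerSeries (Fin 3) ℂ) s * X 2 ^ 4) * (3 * X 1 ^ 2 + (C : ℂ →+* MvPowerSeries (Fin 3) ℂ) s * X 2 ^ 5)
        + (5 * ((C : ℂ →+* MvPowerSeries (Fin 3) ℂ) s)^2 * X 2) * X 2 ^ 8 := by
    rw [← ofNat_eq_C]; ring
  rw [key]
  exact Ideal.add_mem _
    (Ideal.sub_mem _ (Ideal.mul_mem_left _ _ (g2_mem s)) (Ideal.mul_mem_left _ _ (g1_mem s)))
    (Ideal.mul_mem_left _ _ (z8_mem s))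

/-! ### Truncation -/

lemma mem_span_xyz {g : R3}
    (h : ∀ e : Fin 3 →₀ ℕ, e 0 = 0 → e 1 < 4 → e 2 < 8 → coeff e g = 0) :
    g ∈ Ideal.span {(MvPowerSeries.X 0 : R3), MvPowerSeries.X 1 ^ 4, MvPowerSeries.X 2 ^ 8} := by
  classical
  have hX0 : (MvPowerSeries.X 0 : R3) = monomial (single 0 1) 1 := by
    rw [← X_pow_eq, pow_one]
  set f0 : R3 := fun e => coeff (e + Finsupp.single 0 1) g with hf0
  set f1 : R3 := fun e => if e 0 = 0 then coeff (e + Finsupp.single 1 4) g else 0 with hf1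
  set f2 : R3 := fun e => if e 0 = 0 ∧ e 1 < 4 then coeff (e + Finsupp.single 2 8) g else 0 with hf2
  have key : g = MvPowerSeries.X 0 * f0 + MvPowerSeries.X 1 ^ 4 * f1
      + MvPowerSeries.X 2 ^ 8 * f2 := by
    ext e
    rw [map_add, map_add, hX0, X_pow_eq, X_pow_eq, coeff_monomial_mul, coeff_monomial_mul,
      coeff_monomial_mul]
    have app0 : ∀ (i : Fin 3) (a : ℕ), i ≠ 0 → (e - single i a) 0 = e 0 := by
      intro i a hi; rw [tsub_apply, single_apply, if_neg (fun hh => hi hh)]; simp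
    have app1 : ∀ (i : Fin 3) (a : ℕ), i ≠ 1 → (e - single i a) 1 = e 1 := by
      intro i a hi; rw [tsub_apply, single_apply, if_neg (fun hh => hi hh)]; simp
    by_cases h0 : 1 ≤ e 0
    · rw [if_pos (single_le_iff.2 h0)]
      have hv : coeff (e - single 0 1) f0 = coeff e g := by
        rw [coeff_apply, hf0]
        simp only []
        rw [tsub_add_cancel_of_le (single_le_iff.2 h0)]
      rw [hv, one_mul]
      have z1 : coeff (e - single 1 4) f1 = 0 := by
        rw [coeff_apply, hf1]; simp only []
        rw [if_neg]; rw [app0 1 4 (by decide)]; omega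
      have z2 : coeff (e - single 2 8) f2 = 0 := by
        rw [coeff_apply, hf2]; simp only []
        rw [if_neg]; rw [app0 2 8 (by decide)]; intro hc; omega
      split_ifs <;> simp [z1, z2]
    · rw [if_neg (by rw [single_le_iff]; omega)]
      by_cases h1 : 4 ≤ e 1
      · rw [if_pos (single_le_iff.2 h1)]
        have hv : coeff (e - single 1 4) f1 = coeff e g := by
          rw [coeff_apply, hf1]; simp only []
          rw [if_pos (by rw [app0 1 4 (by decide)]; omega),
            tsub_add_cancel_of_le (single_le_iff.2 h1)]
        rw [hv, one_mul]
        have z2 : coeff (e - single 2 8) f2 = 0 := by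
          rw [coeff_apply, hf2]; simp only []
          rw [if_neg]; rw [app0 2 8 (by decide), app1 2 8 (by decide)]; intro hc; omega
        split_ifs <;> simp [z2]
      · rw [if_neg (by rw [single_le_iff]; omega)]
        by_cases h2 : 8 ≤ e 2
        · rw [if_pos (single_le_iff.2 h2)]
          have hv : coeff (e - single 2 8) f2 = coeff e g := by
            rw [coeff_apply, hf2]; simp only []
            rw [if_pos ⟨by rw [app0 2 8 (by decide)]; omega,
                        by rw [app1 2 8 (by decide)]; omega⟩,
              tsub_add_cancel_of_le (single_le_iff.2 h2)]
          rw [hv, one_mul]; ring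
        · rw [if_neg (by rw [single_le_iff]; omega)]
          rw [h e (by omega) (by omega) (by omega)]
          ring
  rw [key]
  refine Ideal.add_mem _ (Ideal.add_mem _ ?_ ?_) ?_
  · exact Ideal.mul_mem_right _ _ (Ideal.subset_span (by simp))
  · exact Ideal.mul_mem_right _ _ (Ideal.subset_span (by simp))
  · exact Ideal.mul_mem_right _ _ (Ideal.subset_span (by simp))


lemma trunc_mem (f : R3) :
    f - ∑ x ∈ grid, coeff (E x.1 x.2) f • M x.1 x.2 ∈ jacobianIdeal s := by
  have hsub : Ideal.span {(MvPowerSeries.X 0 : R3), X 1 ^ 4, X 2 ^ 8} ≤ jacobianIdeal s := by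
    rw [Ideal.span_le]
    rintro t ht
    simp only [Set.mem_insert_iff, Set.mem_singleton_iff] at ht
    rcases ht with rfl | rfl | rfl
    · exact X0_mem s
    · exact y4_mem s
    · exact z8_mem s
  apply hsub
  apply mem_span_xyz
  intro e h0 h1 h2
  have hgen : ∀ i j : ℕ, i < 4 → j < 8 →
      coeff (E i j) (∑ x ∈ grid, coeff (E x.1 x.2) f • M x.1 x.2) = coeff (E i j) f := by
    intro i j hi hj
    rw [map_sum]
    have hterm : ∀ x ∈ grid, coeff (E i j) (coeff (E x.1 x.2) f • M x.1 x.2)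
        = if (i, j) = x then coeff (E x.1 x.2) f else 0 := by
      intro x hx
      rw [map_smul, smul_eq_mul, coeff_M]
      by_cases hh : x.1 = i ∧ x.2 = j
      · rw [if_pos hh, mul_one, if_pos (by rw [← hh.1, ← hh.2])]
      · rw [if_neg hh, mul_zero,
          if_neg (fun hee => hh ⟨(congrArg Prod.fst hee).symm, (congrArg Prod.snd hee).symm⟩)]
    rw [Finset.sum_congr rfl hterm,
      Finset.sum_ite_eq grid (i, j) (fun x => coeff (E x.1 x.2) f),
      if_pos (by simp only [grid, Finset.mem_product, Finset.mem_range]; omega)]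
  have he : e = E (e 1) (e 2) := eq_E_of e h0
  rw [map_sub, he, hgen (e 1) (e 2) h1 h2, sub_self]

-- reduction identities: memberships of the form `M i j - c • M a b ∈ I`
lemma red06 : M 0 6 - (-(5*s/7)) • M 1 4 ∈ jacobianIdeal s := by
  apply memI_of_C_mul s 7 (by norm_num)
  have key : (C : ℂ →+* MvPowerSeries (Fin 3) ℂ) (7:ℂ) * (M 0 6 - (-(5*s/7)) • M 1 4)
      = 7 * X 2 ^ 6 + 5 * (C : ℂ →+* MvPowerSeries (Fin 3) ℂ) s * X 1 * X 2 ^ 4 := by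
    rw [smul_eq_C_mul, mul_sub, ← mul_assoc, C_mul_C,
      show (7:ℂ) * -(5*s/7) = -(5*s) from by ring, map_neg,
      show (C : ℂ →+* MvPowerSeries (Fin 3) ℂ) (5*s) = 5 * (C : ℂ →+* MvPowerSeries (Fin 3) ℂ) s from by rw [map_mul, map_ofNat], M, M,
      ← ofNat_eq_C]
    ring
  rw [key]; exact g2_mem s

lemma red07 : M 0 7 - (-(5*s/7)) • M 1 5 ∈ jacobianIdeal s := by
  apply memI_of_C_mul s 7 (by norm_num)
  have key : (C : ℂ →+* MvPowerSeries (Fin 3) ℂ) (7:ℂ) * (M 0 7 - (-(5*s/7)) • M 1 5)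
      = X 2 * (7 * X 2 ^ 6 + 5 * (C : ℂ →+* MvPowerSeries (Fin 3) ℂ) s * X 1 * X 2 ^ 4) := by
    rw [smul_eq_C_mul, mul_sub, ← mul_assoc, C_mul_C,
      show (7:ℂ) * -(5*s/7) = -(5*s) from by ring, map_neg,
      show (C : ℂ →+* MvPowerSeries (Fin 3) ℂ) (5*s) = 5 * (C : ℂ →+* MvPowerSeries (Fin 3) ℂ) s from by rw [map_mul, map_ofNat], M, M,
      ← ofNat_eq_C]
    ring
  rw [key]; exact Ideal.mul_mem_left _ _ (g2_mem s)

lemma red16 : M 1 6 ∈ jacobianIdeal s := by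
  have : M 1 6 = X 1 * X 2 ^ 6 := by rw [M, pow_one]
  rw [this]; exact yz6_mem s

lemma red17 : M 1 7 ∈ jacobianIdeal s := by
  have : M 1 7 = X 2 * (X 1 * X 2 ^ 6) := by rw [M]; ring
  rw [this]; exact Ideal.mul_mem_left _ _ (yz6_mem s)

lemma red20 : M 2 0 - (-(s/3)) • M 0 5 ∈ jacobianIdeal s := by
  apply memI_of_C_mul s 3 (by norm_num)
  have key : (C : ℂ →+* MvPowerSeries (Fin 3) ℂ) (3:ℂ) * (M 2 0 - (-(s/3)) • M 0 5)
      = 3 * X 1 ^ 2 + (C : ℂ →+* MvPowerSeries (Fin 3) ℂ) s * X 2 ^ 5 := by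
    rw [smul_eq_C_mul, mul_sub, ← mul_assoc, C_mul_C,
      show (3:ℂ) * -(s/3) = -s from by ring, map_neg, M, M, ← ofNat_eq_C]
    ring
  rw [key]; exact g1_mem s

lemma red21 : M 2 1 - (5*s^2/21) • M 1 4 ∈ jacobianIdeal s := by
  apply memI_of_C_mul s 21 (by norm_num)
  have key : (C : ℂ →+* MvPowerSeries (Fin 3) ℂ) (21:ℂ) * (M 2 1 - (5*s^2/21) • M 1 4)
      = (7 * X 2) * (3 * X 1 ^ 2 + (C : ℂ →+* MvPowerSeries (Fin 3) ℂ) s * X 2 ^ 5)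
        - (C : ℂ →+* MvPowerSeries (Fin 3) ℂ) s * (7 * X 2 ^ 6 + 5 * (C : ℂ →+* MvPowerSeries (Fin 3) ℂ) s * X 1 * X 2 ^ 4) := by
    rw [smul_eq_C_mul, mul_sub, ← mul_assoc, C_mul_C,
      show (21:ℂ) * (5*s^2/21) = 5*s^2 from by ring,
      show (C : ℂ →+* MvPowerSeries (Fin 3) ℂ) (5*s^2) = 5 * ((C : ℂ →+* MvPowerSeries (Fin 3) ℂ) s)^2 from by rw [map_mul, map_pow, map_ofNat],
      M, M, ← ofNat_eq_C]
    ring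
  rw [key]
  exact Ideal.sub_mem _ (Ideal.mul_mem_left _ _ (g1_mem s)) (Ideal.mul_mem_left _ _ (g2_mem s))

lemma red22 : M 2 2 - (5*s^2/21) • M 1 5 ∈ jacobianIdeal s := by
  apply memI_of_C_mul s 21 (by norm_num)
  have key : (C : ℂ →+* MvPowerSeries (Fin 3) ℂ) (21:ℂ) * (M 2 2 - (5*s^2/21) • M 1 5)
      = (7 * X 2 ^ 2) * (3 * X 1 ^ 2 + (C : ℂ →+* MvPowerSeries (Fin 3) ℂ) s * X 2 ^ 5)
        - ((C : ℂ →+* MvPowerSeries (Fin 3) ℂ) s * X 2) * (7 * X 2 ^ 6 + 5 * (C : ℂ →+* MvPowerSeries (Fin 3) ℂ) s * X 1 * X 2 ^ 4) := by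
    rw [smul_eq_C_mul, mul_sub, ← mul_assoc, C_mul_C,
      show (21:ℂ) * (5*s^2/21) = 5*s^2 from by ring,
      show (C : ℂ →+* MvPowerSeries (Fin 3) ℂ) (5*s^2) = 5 * ((C : ℂ →+* MvPowerSeries (Fin 3) ℂ) s)^2 from by rw [map_mul, map_pow, map_ofNat],
      M, M, ← ofNat_eq_C]
    ring
  rw [key]
  exact Ideal.sub_mem _ (Ideal.mul_mem_left _ _ (g1_mem s)) (Ideal.mul_mem_left _ _ (g2_mem s))

lemma red2j (j : ℕ) (hj : 3 ≤ j) (hj8 : j < 8) : M 2 j ∈ jacobianIdeal s := by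
  apply memI_of_C_mul s 3 (by norm_num)
  have key : (C : ℂ →+* MvPowerSeries (Fin 3) ℂ) (3:ℂ) * M 2 j
      = X 2 ^ j * (3 * X 1 ^ 2 + (C : ℂ →+* MvPowerSeries (Fin 3) ℂ) s * X 2 ^ 5)
        - ((C : ℂ →+* MvPowerSeries (Fin 3) ℂ) s * X 2 ^ (j - 3)) * X 2 ^ 8 := by
    rw [M, ← ofNat_eq_C]
    have hpow : (X 2 : R3) ^ (j - 3) * X 2 ^ 8 = X 2 ^ j * X 2 ^ 5 := by
      rw [← pow_add, ← pow_add]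
      congr 1
      omega
    linear_combination ((C : ℂ →+* MvPowerSeries (Fin 3) ℂ) s) * hpow
  rw [key]
  exact Ideal.sub_mem _ (Ideal.mul_mem_left _ _ (g1_mem s)) (Ideal.mul_mem_left _ _ (z8_mem s))

lemma red3j (j : ℕ) (hj : 1 ≤ j) (hj8 : j < 8) : M 3 j ∈ jacobianIdeal s := by
  apply memI_of_C_mul s 3 (by norm_num)
  have key : (C : ℂ →+* MvPowerSeries (Fin 3) ℂ) (3:ℂ) * M 3 j
      = (X 1 * X 2 ^ j) * (3 * X 1 ^ 2 + (C : ℂ →+* MvPowerSeries (Fin 3) ℂ) s * X 2 ^ 5)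
        - ((C : ℂ →+* MvPowerSeries (Fin 3) ℂ) s * X 2 ^ (j - 1)) * (X 1 * X 2 ^ 6) := by
    rw [M, ← ofNat_eq_C]
    have hpow : (X 2 : R3) ^ (j - 1) * X 2 ^ 6 = X 2 ^ j * X 2 ^ 5 := by
      rw [← pow_add, ← pow_add]
      congr 1
      omega
    linear_combination ((C : ℂ →+* MvPowerSeries (Fin 3) ℂ) s * X 1) * hpow
  rw [key]
  exact Ideal.sub_mem _ (Ideal.mul_mem_left _ _ (g1_mem s)) (Ideal.mul_mem_left _ _ (yz6_mem s))

lemma red30 : M 3 0 - (-(s/3)) • M 1 5 ∈ jacobianIdeal s := by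
  apply memI_of_C_mul s 3 (by norm_num)
  have key : (C : ℂ →+* MvPowerSeries (Fin 3) ℂ) (3:ℂ) * (M 3 0 - (-(s/3)) • M 1 5)
      = X 1 * (3 * X 1 ^ 2 + (C : ℂ →+* MvPowerSeries (Fin 3) ℂ) s * X 2 ^ 5) := by
    rw [smul_eq_C_mul, mul_sub, ← mul_assoc, C_mul_C,
      show (3:ℂ) * -(s/3) = -s from by ring, map_neg, M, M, ← ofNat_eq_C]
    ring
  rw [key]; exact Ideal.mul_mem_left _ _ (g1_mem s)

end Milnor12

open Milnor12

set_option maxHeartbeats 2000000 in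
/-- For every `s ∈ ℂ`, the quotient of `ℂ[[x,y,z]]` by the ideal generated by
`2x`, `3y² + s·z⁵` and `7z⁶ + 5s·y·z⁴` is a finite-dimensional `ℂ`-vector space of
dimension exactly `12`. -/
theorem milnor_number_is_twelve (s : ℂ) :
    FiniteDimensional ℂ (MvPowerSeries (Fin 3) ℂ ⧸ jacobianIdeal s) ∧
    Module.finrank ℂ (MvPowerSeries (Fin 3) ℂ ⧸ jacobianIdeal s) = 12 := by
  classical
  let mkq : R3 →ₐ[ℂ] (R3 ⧸ jacobianIdeal s) := Ideal.Quotient.mkₐ ℂ (jacobianIdeal s)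
  let b : Fin 2 × Fin 6 → R3 ⧸ jacobianIdeal s := fun k => mkq (M k.1.val k.2.val)
  -- linear independence
  have hind : LinearIndependent ℂ b := by
    rw [Fintype.linearIndependent_iff]
    intro g hg k0
    have h1 : mkq (∑ k : Fin 2 × Fin 6, g k • M k.1.val k.2.val) = 0 := by
      rw [map_sum]
      simpa only [map_smul] using hg
    have h2 : (∑ k : Fin 2 × Fin 6, g k • M k.1.val k.2.val) ∈ jacobianIdeal s := by
      rwa [Ideal.Quotient.mkₐ_eq_mk, Ideal.Quotient.eq_zero_iff_mem] at h1
    have h3 := phi_vanish s _ h2 k0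
    have h4 : phi s (∑ k : Fin 2 × Fin 6, g k • M k.1.val k.2.val) k0 = g k0 := by
      have hadd : ∀ t : Finset (Fin 2 × Fin 6),
          phi s (∑ k ∈ t, g k • M k.1.val k.2.val) k0
            = ∑ k ∈ t, g k * phi s (M k.1.val k.2.val) k0 := by
        intro t
        induction t using Finset.induction with
        | empty => simp [phi]
        | insert _ _ hnot ih =>
            rw [Finset.sum_insert hnot, phi_add, phi_smul, ih, Finset.sum_insert hnot]
      rw [hadd Finset.univ]
      have hM : ∀ k : Fin 2 × Fin 6, phi s (M k.1.val k.2.val) k0 = bas k.1.val k.2.val k0 := by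
        intro k
        rw [phi_M_basis s _ _ (lt_of_lt_of_le k.1.isLt (by norm_num))
          (lt_of_lt_of_le k.2.isLt (by norm_num)), lam,
          if_pos ⟨Nat.lt_succ_iff.mp k.1.isLt, Nat.lt_succ_iff.mp k.2.isLt⟩]
      have hterm : ∀ k : Fin 2 × Fin 6, g k * phi s (M k.1.val k.2.val) k0
          = if k0 = k then g k else 0 := by
        intro k
        rw [hM, bas]
        by_cases hk : k0 = k
        · rw [if_pos (by rw [hk]; exact ⟨rfl, rfl⟩), if_pos hk, mul_one]
        · rw [if_neg, if_neg hk, mul_zero]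
          rintro ⟨ha, hb2⟩
          exact hk (Prod.ext (Fin.ext ha) (Fin.ext hb2))
      rw [Finset.sum_congr rfl (fun k _ => hterm k), Finset.sum_ite_eq Finset.univ k0 g,
        if_pos (Finset.mem_univ k0)]
    rw [h4] at h3
    exact h3
  -- spanning
  have hbmem : ∀ (a bb : ℕ) (h2 : a < 2) (h6 : bb < 6),
      mkq (M a bb) ∈ Submodule.span ℂ (Set.range b) :=
    fun a bb h2 h6 => Submodule.subset_span ⟨(⟨a, h2⟩, ⟨bb, h6⟩), rfl⟩
  have hzero : ∀ (i j : ℕ), M i j ∈ jacobianIdeal s →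
      mkq (M i j) ∈ Submodule.span ℂ (Set.range b) := by
    intro i j hm
    have h0 : mkq (M i j) = 0 := by
      rw [Ideal.Quotient.mkₐ_eq_mk, Ideal.Quotient.eq_zero_iff_mem]; exact hm
    rw [h0]; exact Submodule.zero_mem _
  have hsingle : ∀ (i j : ℕ) (c : ℂ) (a bb : ℕ) (h2 : a < 2) (h6 : bb < 6),
      M i j - c • M a bb ∈ jacobianIdeal s →
      mkq (M i j) ∈ Submodule.span ℂ (Set.range b) := by
    intro i j c a bb h2 h6 hm
    have h0 : mkq (M i j - c • M a bb) = 0 := by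
      rw [Ideal.Quotient.mkₐ_eq_mk, Ideal.Quotient.eq_zero_iff_mem]; exact hm
    rw [map_sub, map_smul, sub_eq_zero] at h0
    rw [h0]
    exact Submodule.smul_mem _ _ (hbmem a bb h2 h6)
  have h32 : ∀ i j : ℕ, i < 4 → j < 8 → mkq (M i j) ∈ Submodule.span ℂ (Set.range b) := by
    intro i j hi hj
    interval_cases i <;> interval_cases j
    · exact hbmem 0 0 (by norm_num) (by norm_num)
    · exact hbmem 0 1 (by norm_num) (by norm_num)
    · exact hbmem 0 2 (by norm_num) (by norm_num)
    · exact hbmem 0 3 (by norm_num) (by norm_num)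
    · exact hbmem 0 4 (by norm_num) (by norm_num)
    · exact hbmem 0 5 (by norm_num) (by norm_num)
    · exact hsingle _ _ _ _ _ (by norm_num) (by norm_num) (red06 s)
    · exact hsingle _ _ _ _ _ (by norm_num) (by norm_num) (red07 s)
    · exact hbmem 1 0 (by norm_num) (by norm_num)
    · exact hbmem 1 1 (by norm_num) (by norm_num)
    · exact hbmem 1 2 (by norm_num) (by norm_num)
    · exact hbmem 1 3 (by norm_num) (by norm_num)
    · exact hbmem 1 4 (by norm_num) (by norm_num)
    · exact hbmem 1 5 (by norm_num) (by norm_num)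
    · exact hzero _ _ (red16 s)
    · exact hzero _ _ (red17 s)
    · exact hsingle _ _ _ _ _ (by norm_num) (by norm_num) (red20 s)
    · exact hsingle _ _ _ _ _ (by norm_num) (by norm_num) (red21 s)
    · exact hsingle _ _ _ _ _ (by norm_num) (by norm_num) (red22 s)
    · exact hzero _ _ (red2j s 3 (by norm_num) (by norm_num))
    · exact hzero _ _ (red2j s 4 (by norm_num) (by norm_num))
    · exact hzero _ _ (red2j s 5 (by norm_num) (by norm_num))
    · exact hzero _ _ (red2j s 6 (by norm_num) (by norm_num))
    · exact hzero _ _ (red2j s 7 (by norm_num) (by norm_num))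
    · exact hsingle _ _ _ _ _ (by norm_num) (by norm_num) (red30 s)
    · exact hzero _ _ (red3j s 1 (by norm_num) (by norm_num))
    · exact hzero _ _ (red3j s 2 (by norm_num) (by norm_num))
    · exact hzero _ _ (red3j s 3 (by norm_num) (by norm_num))
    · exact hzero _ _ (red3j s 4 (by norm_num) (by norm_num))
    · exact hzero _ _ (red3j s 5 (by norm_num) (by norm_num))
    · exact hzero _ _ (red3j s 6 (by norm_num) (by norm_num))
    · exact hzero _ _ (red3j s 7 (by norm_num) (by norm_num))
  have hspan : ⊤ ≤ Submodule.span ℂ (Set.range b) := by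
    rintro x -
    obtain ⟨f, rfl⟩ := Ideal.Quotient.mkₐ_surjective ℂ (I := jacobianIdeal s) x
    have hdec : mkq f = ∑ x ∈ grid, coeff (E x.1 x.2) f • mkq (M x.1 x.2) := by
      have h0 : mkq (f - ∑ x ∈ grid, coeff (E x.1 x.2) f • M x.1 x.2) = 0 := by
        rw [Ideal.Quotient.mkₐ_eq_mk, Ideal.Quotient.eq_zero_iff_mem]
        exact trunc_mem s f
      rw [map_sub, sub_eq_zero] at h0
      rw [h0, map_sum]
      simp only [map_smul]
    rw [show (Ideal.Quotient.mkₐ ℂ (jacobianIdeal s)) f = mkq f from rfl, hdec]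
    refine Submodule.sum_mem _ (fun x hx => Submodule.smul_mem _ _ ?_)
    have hx' : x.1 < 4 ∧ x.2 < 8 := by
      simpa [grid, Finset.mem_product, Finset.mem_range] using hx
    exact h32 x.1 x.2 hx'.1 hx'.2
  let B : Module.Basis (Fin 2 × Fin 6) ℂ (R3 ⧸ jacobianIdeal s) := Module.Basis.mk hind hspan
  refine ⟨Module.Finite.of_basis B, ?_⟩
  rw [Module.finrank_eq_card_basis B]
  simp
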